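/- For every fixed positive integer N, with B_N(u) = Σ_{n=1}^N cos(u·log p_n) where p_n is the n-th prime, one has lim_{T→∞} (1/T) ∫_T^{2T} B_N(u) du = 0 and lim_{T→∞} (1/T) ∫_T^{2T} B_N(u)² du = N/2. That is, with respect to the uniform distribution on [T, 2T], the mean of B_N tends to 0 and its second moment tends to N/2 as T → ∞. -/

import Mathlib

/-!
Expanding `B_N(u)²` with `2 cos x cos y = cos (x - y) + cos (x + y)` turns both moments into
finite sums of averages of `cos (c u)` over `[T, 2T]`. Such an average is `O(1 / (|c| T))` when
`c ≠ 0` and equals `1` when `c = 0`. The frequencies `log p_n` are positive and pairwise distinct,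
so `log p_m + log p_n` never vanishes and `log p_m - log p_n` vanishes only on the diagonal,
which contributes `N · 1/2`.
-/

open MeasureTheory Filter intervalIntegral Topology

noncomputable def dyadicAverage (f : ℝ → ℝ) (T : ℝ) : ℝ :=
  (1 / T) * ∫ u in T..(2 * T), f u

theorem dyadicAverage_const {T : ℝ} (hT : T ≠ 0) (c : ℝ) :
    dyadicAverage (fun _ => c) T = c := by
  simp only [dyadicAverage, intervalIntegral.integral_const, smul_eq_mul]
  field_simp
  ring

theorem dyadicAverage_const_mul (c : ℝ) (f : ℝ → ℝ) (T : ℝ) :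
    dyadicAverage (fun u => c * f u) T = c * dyadicAverage f T := by
  simp only [dyadicAverage, intervalIntegral.integral_const_mul]
  ring

theorem dyadicAverage_add {f g : ℝ → ℝ} (hf : Continuous f) (hg : Continuous g) (T : ℝ) :
    dyadicAverage (fun u => f u + g u) T = dyadicAverage f T + dyadicAverage g T := by
  rw [dyadicAverage, integral_add (hf.intervalIntegrable _ _) (hg.intervalIntegrable _ _), mul_add]
  rfl

theorem dyadicAverage_finsetSum {ι : Type*} (s : Finset ι) {f : ι → ℝ → ℝ}
    (hf : ∀ i ∈ s, Continuous (f i)) (T : ℝ) :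
    dyadicAverage (fun u => ∑ i ∈ s, f i u) T = ∑ i ∈ s, dyadicAverage (f i) T := by
  rw [dyadicAverage, integral_finsetSum fun i hi => (hf i hi).intervalIntegrable _ _,
    Finset.mul_sum]
  rfl

theorem tendsto_dyadicAverage_finsetSum {ι : Type*} (s : Finset ι) {f : ι → ℝ → ℝ}
    (hf : ∀ i ∈ s, Continuous (f i)) {L : ι → ℝ}
    (hL : ∀ i ∈ s, Tendsto (dyadicAverage (f i)) atTop (𝓝 (L i))) :
    Tendsto (dyadicAverage fun u => ∑ i ∈ s, f i u) atTop (𝓝 (∑ i ∈ s, L i)) := by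
  simp only [funext (dyadicAverage_finsetSum s hf)]
  exact tendsto_finsetSum s hL

theorem abs_dyadicAverage_cos_mul_le {c T : ℝ} (hc : c ≠ 0) (hT : 0 < T) :
    |dyadicAverage (fun u => Real.cos (u * c)) T| ≤ 2 / |c| * T⁻¹ := by
  have hsin : |Real.sin (2 * T * c) - Real.sin (T * c)| ≤ 2 := by
    have h₁ := Real.abs_sin_le_one (2 * T * c)
    have h₂ := Real.abs_sin_le_one (T * c)
    exact (abs_sub _ _).trans (by linarith)
  rw [dyadicAverage, integral_comp_mul_right Real.cos hc, integral_cos, smul_eq_mul, abs_mul,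
    abs_mul, abs_inv, abs_of_pos (one_div_pos.mpr hT), one_div]
  calc T⁻¹ * (|c|⁻¹ * |Real.sin (2 * T * c) - Real.sin (T * c)|)
      ≤ T⁻¹ * (|c|⁻¹ * 2) := by gcongr
    _ = 2 / |c| * T⁻¹ := by ring

theorem tendsto_dyadicAverage_cos_mul (c : ℝ) :
    Tendsto (dyadicAverage fun u => Real.cos (u * c)) atTop (𝓝 (if c = 0 then 1 else 0)) := by
  split_ifs with hc
  · subst hc
    refine tendsto_const_nhds.congr' ?_
    filter_upwards [eventually_gt_atTop 0] with T hT
    simpa using (dyadicAverage_const hT.ne' 1).symm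
  · refine squeeze_zero_norm' ?_ (by simpa using tendsto_inv_atTop_zero.const_mul (2 / |c|))
    filter_upwards [eventually_gt_atTop 0] with T hT
    exact abs_dyadicAverage_cos_mul_le hc hT

theorem tendsto_dyadicAverage_cos_mul_mul_cos_mul {a b : ℝ} (ha : 0 < a) (hb : 0 < b) :
    Tendsto (dyadicAverage fun u => Real.cos (u * a) * Real.cos (u * b)) atTop
      (𝓝 (if a = b then 1 / 2 else 0)) := by
  have hlim : (if a = b then (1 : ℝ) / 2 else 0) =
      1 / 2 * (if a - b = 0 then 1 else 0) + 1 / 2 * (if a + b = 0 then 1 else 0) := by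
    simp only [sub_eq_zero, if_neg (by linarith : a + b ≠ 0)]
    split_ifs <;> norm_num
  rw [hlim]
  refine (((tendsto_dyadicAverage_cos_mul _).const_mul _).add
    ((tendsto_dyadicAverage_cos_mul _).const_mul _)).congr fun T => ?_
  have hprod : ∀ u, Real.cos (u * a) * Real.cos (u * b) =
      1 / 2 * Real.cos (u * (a - b)) + 1 / 2 * Real.cos (u * (a + b)) := fun u => by
    rw [mul_sub, mul_add]
    linarith [Real.two_mul_cos_mul_cos (u * a) (u * b)]
  simp only [hprod]
  rw [dyadicAverage_add (by fun_prop) (by fun_prop), dyadicAverage_const_mul,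
    dyadicAverage_const_mul]

theorem tendsto_dyadicAverage_sum_cos_mul {ι : Type*} (s : Finset ι) {a : ι → ℝ}
    (ha : ∀ i ∈ s, a i ≠ 0) :
    Tendsto (dyadicAverage fun u => ∑ i ∈ s, Real.cos (u * a i)) atTop (𝓝 0) := by
  have h := tendsto_dyadicAverage_finsetSum s (fun i _ => by fun_prop) fun i _ =>
    tendsto_dyadicAverage_cos_mul (a i)
  rwa [Finset.sum_eq_zero fun i hi => if_neg (ha i hi)] at h

theorem tendsto_dyadicAverage_sq_sum_cos_mul {ι : Type*} (s : Finset ι) {a : ι → ℝ}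
    (ha : ∀ i ∈ s, 0 < a i) (ha_inj : Set.InjOn a s) :
    Tendsto (dyadicAverage fun u => (∑ i ∈ s, Real.cos (u * a i)) ^ 2) atTop
      (𝓝 (s.card / 2)) := by
  have hrow : ∀ i ∈ s, ∑ j ∈ s, (if a i = a j then (1 : ℝ) / 2 else 0) = 1 / 2 := by
    intro i hi
    classical
    rw [Finset.sum_congr rfl fun j hj => if_congr (ha_inj.eq_iff hi hj) rfl rfl,
      Finset.sum_ite_eq, if_pos hi]
  have hdiag : ∑ i ∈ s, ∑ j ∈ s, (if a i = a j then (1 : ℝ) / 2 else 0) = s.card / 2 := by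
    rw [Finset.sum_congr rfl hrow, Finset.sum_const, nsmul_eq_mul]
    ring
  have hsq : ∀ u, (∑ i ∈ s, Real.cos (u * a i)) ^ 2 =
      ∑ i ∈ s, ∑ j ∈ s, Real.cos (u * a i) * Real.cos (u * a j) := fun u => by
    rw [sq, Finset.sum_mul_sum]
  simp only [hsq, ← hdiag]
  exact tendsto_dyadicAverage_finsetSum s (fun i _ => by fun_prop) fun i hi =>
    tendsto_dyadicAverage_finsetSum s (fun j _ => by fun_prop) fun j hj =>
      tendsto_dyadicAverage_cos_mul_mul_cos_mul (ha i hi) (ha j hj)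

theorem log_nth_prime_pos (n : ℕ) : 0 < Real.log (Nat.nth Nat.Prime n) :=
  Real.log_pos (by exact_mod_cast (Nat.prime_nth_prime n).one_lt)

theorem log_nth_prime_injective : Function.Injective fun n => Real.log (Nat.nth Nat.Prime n) := by
  intro m n h
  have hpos : ∀ k, (0 : ℝ) < Nat.nth Nat.Prime k := fun k => by
    exact_mod_cast (Nat.prime_nth_prime k).pos
  apply Nat.nth_injective Nat.infinite_setOfPred_prime
  exact_mod_cast Real.log_injOn_pos (hpos m) (hpos n) h

theorem BN_moments_general (N : ℕ) (B : ℕ → ℝ → ℝ)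
    (hB : ∀ N u, B N u = ∑ n ∈ Finset.range N, Real.cos (u * Real.log (Nat.nth Nat.Prime n))) :
    Tendsto (fun T : ℝ => (1 / T) * ∫ u in T..(2 * T), B N u) atTop (nhds 0) ∧
    Tendsto (fun T : ℝ => (1 / T) * ∫ u in T..(2 * T), (B N u) ^ 2) atTop
      (nhds ((N : ℝ) / 2)) := by
  have hBN : B N = fun u => ∑ n ∈ Finset.range N, Real.cos (u * Real.log (Nat.nth Nat.Prime n)) :=
    funext (hB N)
  refine ⟨?_, ?_⟩
  · rw [hBN]
    exact tendsto_dyadicAverage_sum_cos_mul _ fun n _ => (log_nth_prime_pos n).ne'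
  · rw [hBN]
    have h := tendsto_dyadicAverage_sq_sum_cos_mul (Finset.range N)
      (fun n _ => log_nth_prime_pos n) log_nth_prime_injective.injOn
    rwa [Finset.card_range] at h

/-- For every fixed positive integer `N`, with
`B_N(u) = ∑_{n=1}^N cos(u log p_n)`, the mean of `B_N` over `[T, 2T]` tends to `0` and the
mean of `B_N²` over `[T, 2T]` tends to `N/2` as `T → ∞`. -/
theorem BN_moments (N : ℕ) (hN : 0 < N) (B : ℕ → ℝ → ℝ)
    (hB : ∀ N u, B N u = ∑ n ∈ Finset.range N, Real.cos (u * Real.log (Nat.nth Nat.Prime n))) :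
    Tendsto (fun T : ℝ => (1 / T) * ∫ u in T..(2 * T), B N u) atTop (nhds 0) ∧
    Tendsto (fun T : ℝ => (1 / T) * ∫ u in T..(2 * T), (B N u) ^ 2) atTop
      (nhds ((N : ℝ) / 2)) :=
  BN_moments_general N B hB
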